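/- Let X ~ μ be an ℝ^d-valued random variable, and let r_n → 0 and a_n → ∞ be sequences of positive reals with (r_n)^d a_n → ∞. Then a_n · μ(B_{r_n}(X)) → ∞ in probability, i.e., for every M > 0, P( a_n μ(B_{r_n}(X)) ≤ M ) → 0. -/

import Mathlib

/-!
Write `s = r / 2`. Every `y ∈ B_s(x)` has `B_s(y) ⊆ B_{2s}(x)`, so averaging `1 / μ(B_s(y))` over
`y ∈ B_s(x)` against Lebesgue measure bounds `1 / μ(B_{2s}(x))`. Integrating over `x ∈ B_R` against
`μ` and exchanging the integrals, each `y` contributes at most `1`, whence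
`∫_{B_R} dμ(x) / μ(B_{2s}(x)) ≤ vol(B_{R+s}) / vol(B_s) = ((R + s) / s)^d`. By Markov's inequality
the points of `B_R` with `a μ(B_r(x)) ≤ M` then have `μ`-mass at most `(M / a) ((2R + r) / r)^d`,
which tends to `0` when `a r^d → ∞` and `r → 0`; the mass outside `B_R` is small by tightness.
-/

open MeasureTheory Metric Filter Set Function
open scoped ENNReal

theorem measure_inter_setOf_le_le_mul_setLIntegral_inv {α : Type*} [MeasurableSpace α]
    {μ : Measure α} {f : α → ℝ≥0∞} (s : Set α) (hf : AEMeasurable f (μ.restrict s))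
    {t : ℝ≥0∞} (ht0 : t ≠ 0) (ht : t ≠ ∞) :
    μ (s ∩ {x | f x ≤ t}) ≤ t * ∫⁻ x in s, (f x)⁻¹ ∂μ :=
  calc μ (s ∩ {x | f x ≤ t})
      ≤ μ.restrict s {x | f x ≤ t} := by rw [inter_comm]; exact Measure.le_restrict_apply _ _
    _ = t * (t⁻¹ * μ.restrict s {x | t⁻¹ ≤ (f x)⁻¹}) := by
      simp_rw [ENNReal.inv_le_inv, ← mul_assoc, ENNReal.mul_inv_cancel ht0 ht, one_mul]
    _ ≤ t * ∫⁻ x in s, (f x)⁻¹ ∂μ := by gcongr; exact mul_meas_ge_le_lintegral₀ hf.inv _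

theorem tendsto_measure_compl_closedBall_atTop {X : Type*} [PseudoMetricSpace X]
    [CompleteSpace X] [SecondCountableTopology X] [MeasurableSpace X] [BorelSpace X]
    (μ : Measure X) [IsFiniteMeasure μ] (x : X) :
    Tendsto (fun R : ℝ => μ (closedBall x R)ᶜ) atTop (nhds 0) := by
  simpa using tendsto_measure_compl_closedBall_of_isTightMeasureSet
    (isTightMeasureSet_singleton (μ := μ)) x

theorem measurable_measure_closedBall {X : Type*} [PseudoMetricSpace X] [MeasurableSpace X]
    [OpensMeasurableSpace X] [SecondCountableTopology X] (μ : Measure X) [SFinite μ] (ρ : ℝ) :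
    Measurable fun x => μ (closedBall x ρ) :=
  measurable_measure_prodMk_left
    (isClosed_le (continuous_snd.dist continuous_fst) continuous_const).measurableSet

theorem measurable_uncurry_indicator_closedBall {X : Type*} [PseudoMetricSpace X]
    [MeasurableSpace X] [OpensMeasurableSpace X] [SecondCountableTopology X] {g : X → ℝ≥0∞}
    (hg : Measurable g) (s : ℝ) :
    Measurable (uncurry fun x y => (closedBall x s).indicator g y) :=
  (hg.comp measurable_snd).indicator
    (isClosed_le (continuous_snd.dist continuous_fst) continuous_const).measurableSet

theorem inv_measure_closedBall_mul_measure_inter_le_indicator {X : Type*} [PseudoMetricSpace X]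
    [MeasurableSpace X] (μ : Measure X) (y z : X) (R s : ℝ) :
    (μ (closedBall y s))⁻¹ * μ (closedBall z R ∩ closedBall y s)
      ≤ (closedBall z (R + s)).indicator 1 y := by
  by_cases hy : y ∈ closedBall z (R + s)
  · rw [indicator_of_mem hy]
    calc (μ (closedBall y s))⁻¹ * μ (closedBall z R ∩ closedBall y s)
        ≤ (μ (closedBall y s))⁻¹ * μ (closedBall y s) := by gcongr; exact inter_subset_right
      _ ≤ 1 := ENNReal.inv_mul_le_one _
  · have : closedBall z R ∩ closedBall y s = ∅ := by
      refine eq_empty_of_forall_notMem fun x ⟨hxz, hxy⟩ => hy ?_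
      rw [mem_closedBall] at *
      linarith [dist_triangle y x z, dist_comm x y]
    simp [this, indicator_of_notMem hy]

section FiniteDimensional

variable {E : Type*} [NormedAddCommGroup E] [NormedSpace ℝ E] [MeasurableSpace E] [BorelSpace E]
  [FiniteDimensional ℝ E]

theorem inv_measure_closedBall_two_mul_le (μ ν : Measure E) [ν.IsAddHaarMeasure] (x : E) {s : ℝ}
    (hs : 0 < s) :
    (μ (closedBall x (2 * s)))⁻¹
      ≤ (∫⁻ y in closedBall x s, (μ (closedBall y s))⁻¹ ∂ν) / ν (closedBall 0 s) := by
  rw [ENNReal.le_div_iff_mul_le (.inl (measure_closedBall_pos ν _ hs).ne')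
    (.inl measure_closedBall_lt_top.ne), ← Measure.addHaar_closedBall_center ν x,
    ← setLIntegral_const]
  refine lintegral_mono_ae <| ae_restrict_of_forall_mem measurableSet_closedBall fun y hy =>
    ENNReal.inv_le_inv' <| measure_mono <| closedBall_subset_closedBall' ?_
  linarith [mem_closedBall.1 hy]

theorem setLIntegral_inv_measure_closedBall_two_mul_le (μ ν : Measure E) [SFinite μ]
    [ν.IsAddHaarMeasure] (z : E) (R : ℝ) {s : ℝ} (hs : 0 < s) :
    ∫⁻ x in closedBall z R, (μ (closedBall x (2 * s)))⁻¹ ∂μ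
      ≤ ν (closedBall z (R + s)) / ν (closedBall 0 s) := by
  set g : E → ℝ≥0∞ := fun y => (μ (closedBall y s))⁻¹
  have hg : Measurable g := (measurable_measure_closedBall μ s).inv
  calc ∫⁻ x in closedBall z R, (μ (closedBall x (2 * s)))⁻¹ ∂μ
      ≤ ∫⁻ x in closedBall z R,
          (∫⁻ y, (closedBall x s).indicator g y ∂ν) / ν (closedBall 0 s) ∂μ :=
        lintegral_mono fun x => by
          rw [lintegral_indicator measurableSet_closedBall]
          exact inv_measure_closedBall_two_mul_le μ ν x hs
    _ = (∫⁻ y, ∫⁻ x in closedBall z R, (closedBall x s).indicator g y ∂μ ∂ν) /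
          ν (closedBall 0 s) := by
        simp_rw [div_eq_mul_inv, lintegral_mul_const' _ _ (ENNReal.inv_ne_top.2
          (measure_closedBall_pos ν _ hs).ne')]
        congr 1
        exact lintegral_lintegral_swap (measurable_uncurry_indicator_closedBall hg s).aemeasurable
    _ ≤ (∫⁻ y, (closedBall z (R + s)).indicator 1 y ∂ν) / ν (closedBall 0 s) := by
        gcongr with y
        have hsymm : ∀ x, (closedBall x s).indicator g y =
            (closedBall y s).indicator (fun _ => g y) x := fun x => by
          by_cases h : y ∈ closedBall x s <;>
            simp [h, mem_closedBall_comm.1, mem_closedBall_comm.not.1]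
        simp_rw [hsymm]
        rw [lintegral_indicator_const measurableSet_closedBall,
          Measure.restrict_apply measurableSet_closedBall, inter_comm]
        exact inv_measure_closedBall_mul_measure_inter_le_indicator μ y z R s
    _ = ν (closedBall z (R + s)) / ν (closedBall 0 s) := by
        rw [lintegral_indicator_one measurableSet_closedBall]

theorem addHaar_closedBall_div_addHaar_closedBall (ν : Measure E) [ν.IsAddHaarMeasure] (x y : E)
    {r s : ℝ} (hr : 0 ≤ r) (hs : 0 < s) :
    ν (closedBall x r) / ν (closedBall y s) = ENNReal.ofReal ((r / s) ^ Module.finrank ℝ E) := by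
  rw [Measure.addHaar_closedBall ν x hr, Measure.addHaar_closedBall ν y hs.le,
    ENNReal.mul_div_mul_right _ _ (measure_ball_pos ν 0 one_pos).ne' measure_ball_lt_top.ne,
    ← ENNReal.ofReal_div_of_pos (by positivity), div_pow]

theorem measure_closedBall_inter_setOf_measure_closedBall_le (μ : Measure E) [SFinite μ] (z : E)
    {R s : ℝ} (hR : 0 ≤ R) (hs : 0 < s) {t : ℝ≥0∞} (ht0 : t ≠ 0) (ht : t ≠ ∞) :
    μ (closedBall z R ∩ {x | μ (closedBall x (2 * s)) ≤ t})
      ≤ t * ENNReal.ofReal (((R + s) / s) ^ Module.finrank ℝ E) := by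
  rw [← addHaar_closedBall_div_addHaar_closedBall Measure.addHaar z 0 (by linarith) hs]
  exact (measure_inter_setOf_le_le_mul_setLIntegral_inv _
    (measurable_measure_closedBall μ _).aemeasurable ht0 ht).trans
    (by gcongr; exact setLIntegral_inv_measure_closedBall_two_mul_le μ _ z R hs)

theorem measure_setOf_mul_measure_closedBall_le (μ : Measure E) [IsFiniteMeasure μ] (z : E)
    {M a r R : ℝ} (hM : 0 < M) (ha : 0 < a) (hr : 0 < r) (hR : 0 ≤ R) :
    μ {x | a * (μ (closedBall x r)).toReal ≤ M}
      ≤ μ (closedBall z R)ᶜ + ENNReal.ofReal (M / a * ((2 * R + r) / r) ^ Module.finrank ℝ E) := by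
  have hsub : {x | a * (μ (closedBall x r)).toReal ≤ M} ⊆ (closedBall z R)ᶜ ∪
      closedBall z R ∩ {x | μ (closedBall x (2 * (r / 2))) ≤ ENNReal.ofReal (M / a)} := by
    intro x hx
    by_cases hxR : x ∈ closedBall z R
    · refine .inr ⟨hxR, ?_⟩
      rw [mul_div_cancel₀ r two_ne_zero, mem_ofPred_eq,
        ENNReal.le_ofReal_iff_toReal_le (measure_ne_top _ _) (by positivity), le_div_iff₀ ha,
        mul_comm]
      exact hx
    · exact .inl hxR
  have hratio : (R + r / 2) / (r / 2) = (2 * R + r) / r := by field_simp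
  calc μ {x | a * (μ (closedBall x r)).toReal ≤ M}
      ≤ μ (closedBall z R)ᶜ +
          μ (closedBall z R ∩ {x | μ (closedBall x (2 * (r / 2))) ≤ ENNReal.ofReal (M / a)}) :=
        (measure_mono hsub).trans (measure_union_le _ _)
    _ ≤ μ (closedBall z R)ᶜ + ENNReal.ofReal (M / a) *
          ENNReal.ofReal (((R + r / 2) / (r / 2)) ^ Module.finrank ℝ E) := by
        gcongr
        exact measure_closedBall_inter_setOf_measure_closedBall_le μ z hR (by positivity)
          (by simpa using div_pos hM ha) ENNReal.ofReal_ne_top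
    _ = _ := by rw [hratio, ← ENNReal.ofReal_mul (by positivity)]

end FiniteDimensional

theorem stmt_8_general (d : ℕ) (μ : Measure (EuclideanSpace ℝ (Fin d))) [IsProbabilityMeasure μ]
    (r a : ℕ → ℝ) (hrpos : ∀ n, 0 < r n) (hapos : ∀ n, 0 < a n)
    (hr : Tendsto r atTop (nhds 0))
    (hra : Tendsto (fun n => r n ^ d * a n) atTop atTop) :
    ∀ M : ℝ, 0 < M →
      Tendsto (fun n => μ {x | a n * (μ (closedBall x (r n))).toReal ≤ M}) atTop (nhds 0) := by
  intro M hM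
  rw [ENNReal.tendsto_nhds_zero]
  intro ε hε
  have hε2 : 0 < ε / 2 := ENNReal.half_pos hε.ne'
  obtain ⟨R, hRμ, hR⟩ := (((tendsto_measure_compl_closedBall_atTop μ 0).eventually
    (eventually_le_nhds hε2)).and (eventually_ge_atTop 0)).exists
  have hbound : Tendsto (fun n => M / a n * ((2 * R + r n) / r n) ^ d) atTop (nhds 0) := by
    have h := ((tendsto_const_nhds (x := M)).mul
      ((tendsto_const_nhds (x := 2 * R)).add hr |>.pow d)).div_atTop hra
    refine h.congr fun n => ?_
    have hrn := hrpos n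
    have han := hapos n
    rw [div_pow]
    field_simp
  have hbound' := ENNReal.tendsto_ofReal hbound
  rw [ENNReal.ofReal_zero] at hbound'
  filter_upwards [hbound'.eventually (eventually_le_nhds hε2)] with n hn
  calc μ {x | a n * (μ (closedBall x (r n))).toReal ≤ M}
      ≤ μ (closedBall 0 R)ᶜ + ENNReal.ofReal (M / a n * ((2 * R + r n) / r n) ^ d) := by
        simpa using measure_setOf_mul_measure_closedBall_le μ 0 hM (hapos n) (hrpos n) hR
    _ ≤ ε / 2 + ε / 2 := add_le_add hRμ hn
    _ = ε := ENNReal.add_halves ε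

/-- If `r_n → 0`, `a_n → ∞` and `a_n r_n^d → ∞`, then `a_n μ(B_{r_n}(X)) → ∞` in probability. -/
theorem stmt_8 (d : ℕ) (μ : Measure (EuclideanSpace ℝ (Fin d))) [IsProbabilityMeasure μ]
    (r a : ℕ → ℝ) (hrpos : ∀ n, 0 < r n) (hapos : ∀ n, 0 < a n)
    (hr : Tendsto r atTop (nhds 0)) (ha : Tendsto a atTop atTop)
    (hra : Tendsto (fun n => r n ^ d * a n) atTop atTop) :
    ∀ M : ℝ, 0 < M →
      Tendsto (fun n => μ {x | a n * (μ (closedBall x (r n))).toReal ≤ M}) atTop (nhds 0) :=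
  stmt_8_general d μ r a hrpos hapos hr hra
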